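/- arXiv:2301.04486 — 2 statements merged into one kernel-verified Lean document; each statement's English description precedes it below -/
import Mathlib

section
/- Let α ∈ (0,1) be irrational with convergents p_n/q_n and β_{n-1} = |q_{n-1} α − p_{n-1}|. If 2 q_{n-1} q_n / q_{n+1} < 1, then ⌊1/β_{n-1}⌋ = q_n and G(β_{n-1}) = q_{n-1}·α_n < 2 q_{n-1} q_n / q_{n+1}, where α_n = G^n(α). -/
open scoped BigOperators

/-- The Gauss map `x ↦ 1/x - ⌊1/x⌋` (with `G 0 = 0`). -/
noncomputable def gaussMap (x : ℝ) : ℝ := if x = 0 then 0 else 1 / x - ⌊1 / x⌋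

/-- Iterates `α_n = G^n(α)` of the Gauss map. -/
noncomputable def alphaSeq (α : ℝ) (n : ℕ) : ℝ := gaussMap^[n] α

/-- Partial quotients `a_n` of the continued fraction of `α`. -/
noncomputable def aSeq (α : ℝ) : ℕ → ℤ
  | 0 => 0
  | n + 1 => ⌊1 / alphaSeq α n⌋

/-- Denominators `q_n` of the best rational approximations of `α`. -/
noncomputable def qSeq (α : ℝ) : ℕ → ℤ
  | 0 => 1
  | 1 => ⌊1 / α⌋
  | n + 2 => qSeq α n + aSeq α (n + 2) * qSeq α (n + 1)

/-- Numerators `p_n` of the best rational approximations of `α`. -/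
noncomputable def pSeq (α : ℝ) : ℕ → ℤ
  | 0 => 0
  | 1 => 1
  | n + 2 => pSeq α n + aSeq α (n + 2) * pSeq α (n + 1)

/-!
Write `β_n = |q_n α - p_n|`. At each step the error `q_n α - p_n` is multiplied by `-α_{n+1}`,
while `X_n = q_{n+1} + q_n α_{n+1}` (`invBeta α n`) is divided by `α_{n+1}`, and
`β_0 X_0 = α (a_1 + α_1) = 1`; hence `1 / β_n = X_n` for all `n`. For `n = m + 1` this writes
`1 / β_m` as the integer `q_{m+1}` plus `q_m α_{m+1}`, and
`α_{m+1} = X_m / X_{m+1} < 2 q_{m+1} / q_{m+2}` because `X_m < 2 q_{m+1}` and `X_{m+1} ≥ q_{m+2}`.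
Under the gap hypothesis `q_m α_{m+1} < 1`, so it is the fractional part of `1 / β_m`.
-/

lemma gaussMap_eq_fract (x : ℝ) : gaussMap x = Int.fract (1 / x) := by
  unfold gaussMap
  split_ifs with hx
  · simp [hx]
  · rfl

lemma gaussMap_nonneg (x : ℝ) : 0 ≤ gaussMap x := by
  rw [gaussMap_eq_fract]
  exact Int.fract_nonneg _

lemma gaussMap_lt_one (x : ℝ) : gaussMap x < 1 := by
  rw [gaussMap_eq_fract]
  exact Int.fract_lt_one _

lemma irrational_gaussMap {x : ℝ} (hx : Irrational x) : Irrational (gaussMap x) := by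
  rw [gaussMap_eq_fract, Int.fract, one_div]
  exact hx.inv.sub_intCast _

lemma gaussMap_pos {x : ℝ} (hx : Irrational x) : 0 < gaussMap x :=
  (gaussMap_nonneg x).lt_of_ne (irrational_gaussMap hx).ne_zero.symm

lemma gaussMap_eq_of_one_div_eq {x t : ℝ} {k : ℤ} (h : 1 / x = k + t) (ht₀ : 0 ≤ t)
    (ht₁ : t < 1) : ⌊1 / x⌋ = k ∧ gaussMap x = t := by
  refine ⟨?_, ?_⟩
  · rw [h, Int.floor_intCast_add, Int.floor_eq_zero_iff.2 ⟨ht₀, ht₁⟩, add_zero]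
  · rw [gaussMap_eq_fract, h, Int.fract_intCast_add, Int.fract_eq_self.2 ⟨ht₀, ht₁⟩]

section ContinuedFraction

variable {α : ℝ}

lemma alphaSeq_zero (α : ℝ) : alphaSeq α 0 = α := rfl

lemma alphaSeq_succ (α : ℝ) (n : ℕ) : alphaSeq α (n + 1) = gaussMap (alphaSeq α n) :=
  Function.iterate_succ_apply' _ _ _

lemma irrational_alphaSeq (hirr : Irrational α) : ∀ n, Irrational (alphaSeq α n)
  | 0 => hirr
  | n + 1 => by
    rw [alphaSeq_succ]
    exact irrational_gaussMap (irrational_alphaSeq hirr n)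

lemma alphaSeq_pos (hα : 0 < α) (hirr : Irrational α) : ∀ n, 0 < alphaSeq α n
  | 0 => hα
  | n + 1 => by
    rw [alphaSeq_succ]
    exact gaussMap_pos (irrational_alphaSeq hirr n)

lemma alphaSeq_lt_one (hα : α < 1) : ∀ n, alphaSeq α n < 1
  | 0 => hα
  | n + 1 => by
    rw [alphaSeq_succ]
    exact gaussMap_lt_one _

lemma alphaSeq_mul_aSeq_add {n : ℕ} (h : alphaSeq α n ≠ 0) :
    alphaSeq α n * (aSeq α (n + 1) + alphaSeq α (n + 1)) = 1 := by
  rw [alphaSeq_succ, gaussMap_eq_fract, aSeq, Int.floor_add_fract]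
  field_simp

lemma one_le_qSeq_and_le_succ (ha : ∀ n, 1 ≤ aSeq α (n + 1)) :
    ∀ n, 1 ≤ qSeq α n ∧ qSeq α n ≤ qSeq α (n + 1)
  | 0 => ⟨le_rfl, ha 0⟩
  | n + 1 => by
    obtain ⟨h₁, h₂⟩ := one_le_qSeq_and_le_succ ha n
    have hq : qSeq α (n + 2) = qSeq α n + aSeq α (n + 2) * qSeq α (n + 1) := rfl
    refine ⟨h₁.trans h₂, ?_⟩
    rw [hq]
    nlinarith [ha (n + 1)]

lemma qSeq_mul_sub_pSeq_succ (h : ∀ k, alphaSeq α k ≠ 0) : ∀ n,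
    (qSeq α (n + 1) : ℝ) * α - pSeq α (n + 1) =
      -alphaSeq α (n + 1) * ((qSeq α n : ℝ) * α - pSeq α n)
  | 0 => by
    have h₀ := alphaSeq_mul_aSeq_add (h 0)
    simp only [qSeq, pSeq, aSeq, alphaSeq_zero] at h₀ ⊢
    push_cast
    linear_combination h₀
  | n + 1 => by
    have ih := qSeq_mul_sub_pSeq_succ h n
    have h₁ := alphaSeq_mul_aSeq_add (h (n + 1))
    simp only [qSeq, pSeq]
    push_cast
    linear_combination (aSeq α (n + 2) + alphaSeq α (n + 2)) * ih
      - ((qSeq α n : ℝ) * α - pSeq α n) * h₁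

noncomputable def invBeta (α : ℝ) (n : ℕ) : ℝ :=
  qSeq α (n + 1) + qSeq α n * alphaSeq α (n + 1)

lemma alphaSeq_succ_mul_invBeta_succ {n : ℕ} (h : alphaSeq α (n + 1) ≠ 0) :
    alphaSeq α (n + 1) * invBeta α (n + 1) = invBeta α n := by
  have h₁ := alphaSeq_mul_aSeq_add h
  simp only [invBeta, qSeq]
  push_cast
  linear_combination (qSeq α (n + 1) : ℝ) * h₁

lemma qSeq_mul_sub_pSeq_mul_invBeta (h : ∀ k, alphaSeq α k ≠ 0) : ∀ n,
    ((qSeq α n : ℝ) * α - pSeq α n) * invBeta α n = (-1) ^ n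
  | 0 => by
    have h₀ := alphaSeq_mul_aSeq_add (h 0)
    simp only [invBeta, qSeq, pSeq, aSeq, alphaSeq_zero] at h₀ ⊢
    push_cast
    linear_combination h₀
  | n + 1 => by
    rw [qSeq_mul_sub_pSeq_succ h, pow_succ, ← qSeq_mul_sub_pSeq_mul_invBeta h n,
      ← alphaSeq_succ_mul_invBeta_succ (h (n + 1))]
    ring

end ContinuedFraction

section UnitInterval

variable {α : ℝ} (hα : α ∈ Set.Ioo (0 : ℝ) 1) (hirr : Irrational α)
include hα hirr

lemma one_le_aSeq_succ (n : ℕ) : 1 ≤ aSeq α (n + 1) :=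
  Int.le_floor.2 (by
    rw [Int.cast_one, le_div_iff₀ (alphaSeq_pos hα.1 hirr n)]
    linarith [alphaSeq_lt_one hα.2 n])

lemma one_le_qSeq (n : ℕ) : (1 : ℝ) ≤ qSeq α n := by
  exact_mod_cast (one_le_qSeq_and_le_succ (one_le_aSeq_succ hα hirr) n).1

lemma qSeq_le_qSeq_succ (n : ℕ) : (qSeq α n : ℝ) ≤ qSeq α (n + 1) := by
  exact_mod_cast (one_le_qSeq_and_le_succ (one_le_aSeq_succ hα hirr) n).2

lemma qSeq_succ_le_invBeta (n : ℕ) : (qSeq α (n + 1) : ℝ) ≤ invBeta α n := by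
  have := mul_pos (zero_lt_one.trans_le (one_le_qSeq hα hirr n)) (alphaSeq_pos hα.1 hirr (n + 1))
  unfold invBeta
  linarith

lemma invBeta_lt_two_mul_qSeq_succ (n : ℕ) : invBeta α n < 2 * qSeq α (n + 1) := by
  have := mul_lt_mul_of_pos_left (alphaSeq_lt_one hα.2 (n + 1))
    (zero_lt_one.trans_le (one_le_qSeq hα hirr n))
  unfold invBeta
  linarith [qSeq_le_qSeq_succ hα hirr n]

lemma one_div_abs_qSeq_mul_sub_pSeq (n : ℕ) :
    1 / |(qSeq α n : ℝ) * α - pSeq α n| = invBeta α n := by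
  have hpos : 0 < invBeta α n :=
    (zero_lt_one.trans_le (one_le_qSeq hα hirr (n + 1))).trans_le (qSeq_succ_le_invBeta hα hirr n)
  have h := congrArg abs
    (qSeq_mul_sub_pSeq_mul_invBeta (fun k => (alphaSeq_pos hα.1 hirr k).ne') n)
  rw [abs_mul, abs_of_pos hpos, abs_pow, abs_neg, abs_one, one_pow] at h
  rw [eq_comm, eq_div_iff_mul_eq (left_ne_zero_of_mul_eq_one h), mul_comm, h]

lemma alphaSeq_succ_lt (n : ℕ) : alphaSeq α (n + 1) < 2 * qSeq α (n + 1) / qSeq α (n + 2) := by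
  rw [lt_div_iff₀ (zero_lt_one.trans_le (one_le_qSeq hα hirr (n + 2)))]
  calc alphaSeq α (n + 1) * qSeq α (n + 2)
      ≤ alphaSeq α (n + 1) * invBeta α (n + 1) :=
        mul_le_mul_of_nonneg_left (qSeq_succ_le_invBeta hα hirr (n + 1))
          (alphaSeq_pos hα.1 hirr (n + 1)).le
    _ = invBeta α n := alphaSeq_succ_mul_invBeta_succ (alphaSeq_pos hα.1 hirr (n + 1)).ne'
    _ < 2 * qSeq α (n + 1) := invBeta_lt_two_mul_qSeq_succ hα hirr n

end UnitInterval

/-- Let `α ∈ (0,1)` be irrational with convergents `p_n/q_n` and `β_{n-1} = |q_{n-1}α − p_{n-1}|`.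
If `2 q_{n-1} q_n / q_{n+1} < 1`, then `⌊1/β_{n-1}⌋ = q_n` and
`G(β_{n-1}) = q_{n-1}·α_n < 2 q_{n-1} q_n / q_{n+1}`. -/
theorem stmt5 (α : ℝ) (hα : α ∈ Set.Ioo (0 : ℝ) 1) (hirr : Irrational α) (n : ℕ) (hn : 1 ≤ n)
    (hgap : 2 * (qSeq α (n - 1) : ℝ) * (qSeq α n : ℝ) / (qSeq α (n + 1) : ℝ) < 1) :
    ⌊1 / |(qSeq α (n - 1) : ℝ) * α - (pSeq α (n - 1) : ℝ)|⌋ = qSeq α n ∧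
    gaussMap (|(qSeq α (n - 1) : ℝ) * α - (pSeq α (n - 1) : ℝ)|) =
      (qSeq α (n - 1) : ℝ) * alphaSeq α n ∧
    (qSeq α (n - 1) : ℝ) * alphaSeq α n <
      2 * (qSeq α (n - 1) : ℝ) * (qSeq α n : ℝ) / (qSeq α (n + 1) : ℝ) := by
  obtain ⟨m, rfl⟩ : ∃ m, n = m + 1 := ⟨n - 1, by omega⟩
  simp only [Nat.add_sub_cancel] at hgap ⊢
  have hqm : (0 : ℝ) < qSeq α m := zero_lt_one.trans_le (one_le_qSeq hα hirr m)
  have hlt : (qSeq α m : ℝ) * alphaSeq α (m + 1) <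
      2 * (qSeq α m : ℝ) * qSeq α (m + 1) / qSeq α (m + 2) := by
    rw [mul_comm 2, mul_assoc, mul_div_assoc]
    exact mul_lt_mul_of_pos_left (alphaSeq_succ_lt hα hirr m) hqm
  obtain ⟨hfloor, hgauss⟩ :=
    gaussMap_eq_of_one_div_eq (one_div_abs_qSeq_mul_sub_pSeq hα hirr m)
      (mul_pos hqm (alphaSeq_pos hα.1 hirr (m + 1))).le (hlt.trans hgap)
  exact ⟨hfloor, hgauss, hlt⟩
end

section
/- Let F be an orientation-preserving homeomorphism of ℝ×[0,1] commuting with T(x,y)=(x+1,y), whose rotation number ρ(F) := lim_n (p₁(Fⁿ(x̃)) − p₁(x̃))/n exists and equals α for boundary points. For a, b ∈ ℤ and n ≥ 1 with {nα} ≠ 0, if H is a homeomorphism of ℝ×[0,1] with F_n H = H T where F_n = T^{−⌊nα⌋}F^n, and J(x,y) = (−x,y), then the rotation number of (HJ)^{−1} T^b F^a (HJ) equals −(aα + b)/{nα}. -/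
/-- The strip `ℝ × [0,1]`, universal cover of the annulus. -/
abbrev AnnulusCover : Type := ℝ × Set.Icc (0 : ℝ) 1

/-- Horizontal translation `z ↦ (z₁ + k, z₂)`; `shiftA 1` is the deck transformation `T`. -/
def shiftA (k : ℝ) (z : AnnulusCover) : AnnulusCover := (z.1 + k, z.2)

/-- The reflection `J(x,y) = (−x,y)`. -/
def Jmap : Equiv.Perm AnnulusCover where
  toFun z := (-z.1, z.2)
  invFun z := (-z.1, z.2)
  left_inv z := by simp
  right_inv z := by simp

/-!
Conjugation by `H` turns `Fₙ = T^(-⌊nα⌋) Fⁿ` into `T`, so `ψ = p₁ ∘ H⁻¹` satisfies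
`ψ ∘ Fₙ = ψ + 1`, and `ψ` grows at most linearly because `H⁻¹ T H` commutes with `T`.
With `β = (aα + b)/{nα}` and `j = ⌊mβ⌋` one writes `T^(bm) F^(am) = Fₙ^j T^c F^d` where
`0 ≤ c + dα ≤ {nα}`. Compactness of a fundamental domain makes the rotation number of `F` uniform,
so `T^c F^d` moves points by `o(m)`, whence `ψ (T^(bm) F^(am) u) = mβ + o(m)`; the reflection `J`
contributes the sign.
-/

open Filter Topology

namespace AnnulusCover

def toPermHom : (AnnulusCover ≃ₜ AnnulusCover) →* Equiv.Perm AnnulusCover where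
  toFun := Homeomorph.toEquiv
  map_one' := rfl
  map_mul' _ _ := rfl

lemma toEquiv_zpow_apply (F : AnnulusCover ≃ₜ AnnulusCover) (k : ℤ) (z : AnnulusCover) :
    ((F.toEquiv : Equiv.Perm AnnulusCover) ^ k) z = (F ^ k) z := by
  change (toPermHom F ^ k) z = _
  rw [← map_zpow]
  rfl

lemma toEquiv_pow_apply (F : AnnulusCover ≃ₜ AnnulusCover) (k : ℕ) (z : AnnulusCover) :
    ((F.toEquiv : Equiv.Perm AnnulusCover) ^ k) z = (F ^ k) z := by
  exact_mod_cast toEquiv_zpow_apply F k z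

def deck : AnnulusCover ≃ₜ AnnulusCover :=
  (Homeomorph.addRight (1 : ℝ)).prodCongr (Homeomorph.refl _)

lemma deck_zpow_apply (k : ℤ) (z : AnnulusCover) : (deck ^ k) z = shiftA k z := by
  induction k using Int.induction_on generalizing z with
  | zero => simp [shiftA]
  | succ k ih =>
    rw [zpow_add_one, Homeomorph.mul_apply, ih]
    simp [deck, shiftA]
    ring
  | pred k ih =>
    rw [zpow_sub_one, Homeomorph.mul_apply, ih]
    simp [deck, shiftA, Homeomorph.addRight_symm]
    ring

lemma deck_apply (z : AnnulusCover) : deck z = shiftA 1 z := by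
  simpa using deck_zpow_apply 1 z

lemma commute_deck_of_apply {F : AnnulusCover ≃ₜ AnnulusCover}
    (hF : ∀ z, F (shiftA 1 z) = shiftA 1 (F z)) : Commute F deck := by
  ext1 z
  simpa only [Homeomorph.mul_apply, deck_apply] using hF z

lemma deck_zpow_sub_mul_zpow_add {F : AnnulusCover ≃ₜ AnnulusCover} (hF : Commute F deck)
    (c d p n : ℤ) : deck ^ (c - p) * F ^ (d + n) = deck ^ (-p) * F ^ n * (deck ^ c * F ^ d) := by
  rw [sub_eq_neg_add, add_comm d, zpow_add, zpow_add, mul_assoc, mul_assoc, ← mul_assoc (deck ^ c),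
    ← mul_assoc (F ^ n), ((hF.zpow_zpow n c).symm).eq]

def disp (g : AnnulusCover ≃ₜ AnnulusCover) (z : AnnulusCover) : ℝ := (g z).1 - z.1

def HasRotationNumber (g : AnnulusCover ≃ₜ AnnulusCover) (α : ℝ) : Prop :=
  ∀ z, Tendsto (fun m : ℕ => disp (g ^ m) z / m) atTop (𝓝 α)

lemma continuous_disp (g : AnnulusCover ≃ₜ AnnulusCover) : Continuous (disp g) :=
  (continuous_fst.comp g.continuous).sub continuous_fst

lemma disp_mul (g h : AnnulusCover ≃ₜ AnnulusCover) (z : AnnulusCover) :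
    disp (g * h) z = disp g (h z) + disp h z := by
  simp only [disp, Homeomorph.mul_apply]
  ring

lemma disp_inv (g : AnnulusCover ≃ₜ AnnulusCover) (z : AnnulusCover) :
    disp g⁻¹ z = -disp g (g⁻¹ z) := by
  rw [eq_neg_iff_add_eq_zero, add_comm, ← disp_mul, mul_inv_cancel]
  simp [disp]

lemma disp_deck_zpow_apply {g : AnnulusCover ≃ₜ AnnulusCover} (hg : Commute g deck) (k : ℤ)
    (z : AnnulusCover) : disp g ((deck ^ k) z) = disp g z := by
  have h : g ((deck ^ k) z) = (deck ^ k) (g z) := congrArg (· z) (hg.zpow_right k).eq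
  rw [disp, disp, h, deck_zpow_apply, deck_zpow_apply]
  simp only [shiftA]
  ring

def fundamentalDomain : Set AnnulusCover := Set.Icc 0 1 ×ˢ Set.univ

lemma isCompact_fundamentalDomain : IsCompact fundamentalDomain :=
  isCompact_Icc.prod isCompact_univ

lemma exists_mem_fundamentalDomain (z : AnnulusCover) :
    ∃ w ∈ fundamentalDomain, (deck ^ ⌊z.1⌋) w = z := by
  refine ⟨(Int.fract z.1, z.2), ⟨⟨Int.fract_nonneg _, (Int.fract_lt_one _).le⟩, trivial⟩, ?_⟩
  simp [deck_zpow_apply, shiftA]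

lemma exists_abs_disp_le {g : AnnulusCover ≃ₜ AnnulusCover} (hg : Commute g deck) :
    ∃ M, 0 ≤ M ∧ ∀ z, |disp g z| ≤ M := by
  obtain ⟨M, hM⟩ :=
    isCompact_fundamentalDomain.exists_bound_of_continuousOn (continuous_disp g).continuousOn
  refine ⟨max M 0, le_max_right _ _, fun z => ?_⟩
  obtain ⟨w, hw, hwz⟩ := exists_mem_fundamentalDomain z
  rw [← hwz, disp_deck_zpow_apply hg]
  exact (hM w hw).trans (le_max_left _ _)

lemma abs_disp_pow_le {g : AnnulusCover ≃ₜ AnnulusCover} {M : ℝ} (hM : ∀ z, |disp g z| ≤ M)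
    (k : ℕ) (z : AnnulusCover) : |disp (g ^ k) z| ≤ M * k := by
  induction k generalizing z with
  | zero => simp [disp]
  | succ k ih =>
    rw [pow_succ, disp_mul]
    calc |disp (g ^ k) (g z) + disp g z| ≤ M * k + M :=
          (abs_add_le _ _).trans (add_le_add (ih _) (hM z))
      _ = M * (k + 1 : ℕ) := by push_cast; ring

lemma exists_abs_disp_zpow_le {g : AnnulusCover ≃ₜ AnnulusCover} (hg : Commute g deck) :
    ∃ M, 0 ≤ M ∧ ∀ (k : ℤ) z, |disp (g ^ k) z| ≤ M * |(k : ℝ)| := by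
  obtain ⟨M₁, hM₁, h₁⟩ := exists_abs_disp_le hg
  obtain ⟨M₂, -, h₂⟩ := exists_abs_disp_le hg.inv_left
  refine ⟨max M₁ M₂, le_max_of_le_left hM₁, fun k z => ?_⟩
  obtain ⟨k, rfl | rfl⟩ := Int.eq_nat_or_neg k
  · simpa using abs_disp_pow_le (fun z => (h₁ z).trans (le_max_left M₁ M₂)) k z
  · simpa using abs_disp_pow_le (fun z => (h₂ z).trans (le_max_right M₁ M₂)) k z

section Rotation

variable {g : AnnulusCover ≃ₜ AnnulusCover} {α : ℝ}

lemma exists_uniform_good_time (hg : Commute g deck)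
    (hrot : HasRotationNumber g α) {ε : ℝ} (hε : 0 < ε) :
    ∃ N : ℕ, ∀ z, ∃ k ∈ Finset.Icc 1 N, |disp (g ^ k) z - k * α| < ε * k := by
  let good (k : ℕ) : Set AnnulusCover := {z | |disp (g ^ k) z - k * α| < ε * k}
  have hopen (k : ℕ) : IsOpen (good k) :=
    isOpen_lt ((continuous_disp _).sub continuous_const).abs continuous_const
  have hcover : fundamentalDomain ⊆ ⋃ N : ℕ, ⋃ k ∈ Finset.Icc 1 N, good k := by
    intro z _
    obtain ⟨k, hk, hk1⟩ :=
      (((hrot z).eventually (Metric.ball_mem_nhds α hε)).and (eventually_ge_atTop 1)).exists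
    have hkpos : (0 : ℝ) < k := by exact_mod_cast hk1
    have hgood : z ∈ good k := by
      have hsplit : disp (g ^ k) z - k * α = (disp (g ^ k) z / k - α) * k := by field_simp
      rw [Real.dist_eq] at hk
      show |disp (g ^ k) z - k * α| < ε * k
      rw [hsplit, abs_mul, abs_of_pos hkpos]
      exact mul_lt_mul_of_pos_right hk hkpos
    exact Set.mem_iUnion.mpr ⟨k, Set.mem_iUnion₂.mpr ⟨k, Finset.mem_Icc.mpr ⟨hk1, le_rfl⟩, hgood⟩⟩
  obtain ⟨N, hN⟩ := isCompact_fundamentalDomain.elim_directed_cover _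
    (fun N => isOpen_biUnion fun k _ => hopen k) hcover
    (Monotone.directed_le fun _ _ h => Set.biUnion_subset_biUnion_left
      (Finset.coe_subset.mpr (Finset.Icc_subset_Icc le_rfl h)))
  refine ⟨N, fun z => ?_⟩
  obtain ⟨w, hw, hwz⟩ := exists_mem_fundamentalDomain z
  obtain ⟨k, hk, hwk⟩ := Set.mem_iUnion₂.mp (hN hw)
  exact ⟨k, hk, by rwa [← hwz, disp_deck_zpow_apply (hg.pow_left k)]⟩

theorem exists_abs_disp_pow_sub_le (hg : Commute g deck)
    (hrot : HasRotationNumber g α) {ε : ℝ} (hε : 0 < ε) :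
    ∃ C, ∀ (m : ℕ) z, |disp (g ^ m) z - m * α| ≤ ε * m + C := by
  obtain ⟨N, hN⟩ := exists_uniform_good_time hg hrot hε
  obtain ⟨M, hM0, hM⟩ := exists_abs_disp_le hg
  refine ⟨N * (M + |α|), fun m => ?_⟩
  induction m using Nat.strong_induction_on with | _ m ih => ?_
  intro z
  by_cases hmN : m ≤ N
  · have hdisp := abs_disp_pow_le hM m z
    have hmN' : (m : ℝ) ≤ N := by exact_mod_cast hmN
    calc |disp (g ^ m) z - m * α| ≤ |disp (g ^ m) z| + m * |α| := by
          simpa [abs_mul] using abs_sub (disp (g ^ m) z) (m * α)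
      _ ≤ N * (M + |α|) := by nlinarith [abs_nonneg α]
      _ ≤ ε * m + N * (M + |α|) := by nlinarith [hε.le, (Nat.cast_nonneg m : (0 : ℝ) ≤ m)]
  · obtain ⟨k, hk, hgood⟩ := hN z
    rw [Finset.mem_Icc] at hk
    have hsplit : disp (g ^ m) z = disp (g ^ (m - k)) ((g ^ k) z) + disp (g ^ k) z := by
      rw [← disp_mul, ← pow_add, Nat.sub_add_cancel (by omega)]
    have hcast : ((m - k : ℕ) : ℝ) = m - k := Nat.cast_sub (by omega)
    have hrest := ih (m - k) (by omega) ((g ^ k) z)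
    rw [hcast] at hrest
    calc |disp (g ^ m) z - m * α|
        = |(disp (g ^ (m - k)) ((g ^ k) z) - (m - k) * α) + (disp (g ^ k) z - k * α)| := by
          rw [hsplit]; ring_nf
      _ ≤ (ε * (m - k) + N * (M + |α|)) + ε * k := (abs_add_le _ _).trans (by linarith)
      _ = ε * m + N * (M + |α|) := by ring

theorem exists_abs_disp_zpow_sub_le (hg : Commute g deck)
    (hrot : HasRotationNumber g α) {ε : ℝ} (hε : 0 < ε) :
    ∃ C, ∀ (d : ℤ) z, |disp (g ^ d) z - d * α| ≤ ε * |(d : ℝ)| + C := by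
  obtain ⟨C, hC⟩ := exists_abs_disp_pow_sub_le hg hrot hε
  refine ⟨C, fun d z => ?_⟩
  obtain ⟨k, rfl | rfl⟩ := Int.eq_nat_or_neg d
  · simpa using hC k z
  · have h := hC k ((g ^ k)⁻¹ z)
    rw [zpow_neg, zpow_natCast, disp_inv]
    rw [← abs_neg] at h
    push_cast
    rw [abs_neg, Nat.abs_cast]
    convert h using 2
    ring

end Rotation

theorem exists_abs_fst_inv_apply_le {H Φ : AnnulusCover ≃ₜ AnnulusCover}
    (hΦ : Commute Φ deck) (hH : Φ * H = H * deck) :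
    ∃ A, 0 ≤ A ∧ ∀ v, |(H⁻¹ v).1| ≤ A * (|v.1| + 1) := by
  set S := H⁻¹ * deck * H
  have hS : Commute S deck := by
    have hconj : H⁻¹ * Φ * H = deck := by rw [mul_assoc, hH, inv_mul_cancel_left]
    have h := (Commute.conj_iff H⁻¹).mpr hΦ.symm
    rwa [inv_inv, hconj] at h
  -- `S` is `T` transported by `H`, so `ψ (T^k v) = ψ v + disp (S^k) (H⁻¹ v)`.
  have hSpow (k : ℤ) (v : AnnulusCover) : H⁻¹ ((deck ^ k) v) = (S ^ k) (H⁻¹ v) := by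
    have h : S ^ k = H⁻¹ * deck ^ k * H := by
      simpa only [inv_inv] using conj_zpow (a := H⁻¹) (b := deck) (i := k)
    simp [h]
  obtain ⟨M, hM0, hM⟩ := exists_abs_disp_zpow_le hS
  obtain ⟨M₀, hM₀⟩ := isCompact_fundamentalDomain.exists_bound_of_continuousOn
    (continuous_fst.comp H.symm.continuous).continuousOn
  refine ⟨max M₀ 0 + M, by positivity, fun v => ?_⟩
  obtain ⟨r, hr, hrv⟩ := exists_mem_fundamentalDomain v
  have hfloor : |(⌊v.1⌋ : ℝ)| ≤ |v.1| + 1 := abs_le.mpr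
    ⟨by linarith [Int.sub_one_lt_floor v.1, neg_abs_le v.1],
      by linarith [Int.floor_le v.1, le_abs_self v.1]⟩
  have hsplit : (H⁻¹ v).1 = (H⁻¹ r).1 + disp (S ^ ⌊v.1⌋) (H⁻¹ r) := by
    rw [disp, ← hSpow, hrv]
    ring
  have hr₀ : |(H⁻¹ r).1| ≤ max M₀ 0 := (hM₀ r hr).trans (le_max_left _ _)
  calc |(H⁻¹ v).1| ≤ max M₀ 0 + M * (|v.1| + 1) := by
        rw [hsplit]
        refine (abs_add_le _ _).trans (add_le_add hr₀ ((hM _ _).trans ?_))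
        exact mul_le_mul_of_nonneg_left (by exact_mod_cast hfloor) hM0
    _ ≤ (max M₀ 0 + M) * (|v.1| + 1) := by
        nlinarith [le_max_right M₀ 0, abs_nonneg v.1]

lemma fst_inv_apply_of_mul_eq {H Φ : AnnulusCover ≃ₜ AnnulusCover} (hH : Φ * H = H * deck)
    (v : AnnulusCover) : (H⁻¹ (Φ v)).1 = (H⁻¹ v).1 + 1 := by
  have h : H⁻¹ * Φ = deck * H⁻¹ := by
    rw [eq_mul_inv_iff_mul_eq, mul_assoc, hH, inv_mul_cancel_left]
  have hv := congrArg (· v) h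
  simp only [Homeomorph.mul_apply] at hv
  rw [hv, deck_apply, shiftA]

theorem exists_abs_fst_inv_apply_deck_zpow_mul_zpow_le {F H : AnnulusCover ≃ₜ AnnulusCover}
    {α A : ℝ} (hF : Commute F deck)
    (hrot : HasRotationNumber F α)
    (hA : 0 ≤ A) (hH : ∀ v, |(H⁻¹ v).1| ≤ A * (|v.1| + 1)) (u : AnnulusCover)
    {ε : ℝ} (hε : 0 < ε) :
    ∃ C, ∀ c d : ℤ, |c + d * α| ≤ 1 → |(H⁻¹ ((deck ^ c * F ^ d) u)).1| ≤ ε * |(d : ℝ)| + C := by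
  set ε' := ε / (A + 1)
  obtain ⟨C, hC⟩ := exists_abs_disp_zpow_sub_le hF hrot (div_pos hε (by linarith : 0 < A + 1))
  refine ⟨A * (|u.1| + C + 2), fun c d hcd => ?_⟩
  set w := (deck ^ c * F ^ d) u
  have hw : w.1 = u.1 + (c + d * α) + (disp (F ^ d) u - d * α) := by
    simp only [w, Homeomorph.mul_apply, deck_zpow_apply, shiftA, disp]
    ring
  have hw' : |w.1| ≤ |u.1| + 1 + (ε' * |(d : ℝ)| + C) := by
    rw [hw]
    exact (abs_add_le _ _).trans (add_le_add ((abs_add_le _ _).trans (by linarith)) (hC d u))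
  have hAε : A * ε' ≤ ε := by
    rw [mul_div_assoc', div_le_iff₀ (by linarith)]
    nlinarith
  calc |(H⁻¹ w).1| ≤ A * (|w.1| + 1) := hH w
    _ ≤ A * (|u.1| + 1 + (ε' * |(d : ℝ)| + C) + 1) := by gcongr
    _ = A * ε' * |(d : ℝ)| + A * (|u.1| + C + 2) := by ring
    _ ≤ ε * |(d : ℝ)| + A * (|u.1| + C + 2) := by gcongr

theorem tendsto_div_of_forall_abs_sub_le {f : ℕ → ℝ} {β : ℝ}
    (h : ∀ ε > 0, ∃ C, ∀ m : ℕ, |f m - β * m| ≤ ε * m + C) :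
    Tendsto (fun m => f m / m) atTop (𝓝 β) := by
  refine Metric.tendsto_nhds.mpr fun ε hε => ?_
  obtain ⟨C, hC⟩ := h (ε / 2) (half_pos hε)
  filter_upwards [(tendsto_const_div_atTop_nhds_zero_nat C).eventually (gt_mem_nhds (half_pos hε)),
    eventually_gt_atTop 0] with m hCm hm
  have hm' : (0 : ℝ) < m := by exact_mod_cast hm
  rw [div_lt_iff₀ hm'] at hCm
  rw [Real.dist_eq, show f m / m - β = (f m - β * m) / m by field_simp, abs_div, Nat.abs_cast,
    div_lt_iff₀ hm']
  linarith [hC m]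

theorem tendsto_div_of_apply_sub_add_eq_add_one {φ : ℤ → ℤ → ℝ} {α : ℝ} {p n : ℤ}
    (hγ : 0 < n * α - p) (hper : ∀ c d, φ (c - p) (d + n) = φ c d + 1)
    (hbd : ∀ ε > 0, ∃ C, ∀ c d : ℤ, 0 ≤ c + d * α → c + d * α ≤ n * α - p →
      |φ c d| ≤ ε * |(d : ℝ)| + C)
    (a b : ℤ) :
    Tendsto (fun m : ℕ => φ (b * m) (a * m) / m) atTop (𝓝 ((a * α + b) / (n * α - p))) := by
  set β := (a * α + b) / (n * α - p)
  have hβ : β * (n * α - p) = a * α + b := div_mul_cancel₀ _ hγ.ne'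
  have hiter (j : ℤ) (c d : ℤ) : φ (c - j * p) (d + j * n) = φ c d + j := by
    induction j using Int.induction_on with
    | zero => simp
    | succ j ih =>
      rw [show c - (j + 1) * p = c - j * p - p by ring,
        show d + (j + 1) * n = d + j * n + n by ring, hper, ih]
      push_cast; ring
    | pred j ih =>
      have h := hper (c - (-j - 1) * p) (d + (-j - 1) * n)
      rw [show c - (-j - 1) * p - p = c - -j * p by ring,
        show d + (-j - 1) * n + n = d + -j * n by ring, ih] at h
      push_cast at h ⊢
      linarith
  refine tendsto_div_of_forall_abs_sub_le fun ε hε => ?_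
  set K := |(a : ℝ)| + |(n : ℝ)| * (|β| + 1) + 1
  have hK : 0 < K := by positivity
  obtain ⟨C, hC⟩ := hbd (ε / K) (div_pos hε hK)
  refine ⟨ε / K * |(n : ℝ)| + C + 1, fun m => ?_⟩
  have hm : (0 : ℝ) ≤ m := Nat.cast_nonneg m
  -- `j = ⌊mβ⌋` moves `(bm, am)` along `(-p, n)` into the strip `0 ≤ c + dα ≤ nα - p`.
  set j := ⌊m * β⌋
  have hj₁ : (j : ℝ) ≤ m * β := Int.floor_le _
  have hj₂ : m * β - 1 < j := Int.sub_one_lt_floor _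
  have hstrip : ((b * m + j * p : ℤ) : ℝ) + ((a * m - j * n : ℤ) : ℝ) * α
      = (n * α - p) * (m * β - j) := by
    push_cast
    linear_combination (-(m : ℝ)) * hβ
  have hshift : φ (b * m) (a * m) = φ (b * m + j * p) (a * m - j * n) + j := by
    rw [← hiter]; ring_nf
  have hj : |(j : ℝ)| ≤ |β| * m + 1 :=
    abs_le.mpr ⟨by nlinarith [neg_abs_le β], by nlinarith [le_abs_self β]⟩
  have hd : |((a * m - j * n : ℤ) : ℝ)| ≤ K * m + |(n : ℝ)| := by
    push_cast
    calc |(a : ℝ) * m - j * n| ≤ |(a : ℝ)| * m + |(j : ℝ)| * |(n : ℝ)| := by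
          simpa [abs_mul] using abs_sub ((a : ℝ) * m) (j * n)
      _ ≤ |(a : ℝ)| * m + (|β| * m + 1) * |(n : ℝ)| := by gcongr
      _ ≤ K * m + |(n : ℝ)| := by nlinarith [abs_nonneg (n : ℝ)]
  have hφ := hC (b * m + j * p) (a * m - j * n) (by rw [hstrip]; nlinarith)
    (by rw [hstrip]; nlinarith)
  calc |φ (b * m) (a * m) - β * m|
      ≤ |φ (b * m + j * p) (a * m - j * n)| + |(j : ℝ) - m * β| := by
        rw [hshift]; exact (abs_add_le _ _).trans_eq' (by ring_nf)
    _ ≤ ε / K * (K * m + |(n : ℝ)|) + C + 1 := by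
        gcongr ?_ + ?_
        · exact hφ.trans (by gcongr)
        · exact abs_le.mpr ⟨by linarith, by linarith⟩
    _ = ε * m + (ε / K * |(n : ℝ)| + C + 1) := by field_simp; ring

lemma deck_zpow_neg_mul_zpow_mul_eq {F H : AnnulusCover ≃ₜ AnnulusCover} {p : ℤ} {n : ℕ}
    (hH : ∀ z, shiftA (-(p : ℝ)) (((F.toEquiv : Equiv.Perm AnnulusCover) ^ (n : ℤ)) (H z))
      = H (shiftA 1 z)) :
    deck ^ (-p) * F ^ (n : ℤ) * H = H * deck := by
  ext1 w
  rw [Homeomorph.mul_apply, Homeomorph.mul_apply, Homeomorph.mul_apply, deck_zpow_apply,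
    deck_apply, ← toEquiv_zpow_apply, ← hH w]
  push_cast
  rfl

lemma fst_iterate_conj {F H : AnnulusCover ≃ₜ AnnulusCover} (hF : Commute F deck) (a b : ℤ)
    (z : AnnulusCover) (m : ℕ) :
    ((fun w : AnnulusCover => Jmap.symm (H.symm (shiftA (b : ℝ)
        (((F.toEquiv : Equiv.Perm AnnulusCover) ^ a) (H (Jmap w))))))^[m] z).1
      = -(H⁻¹ ((deck ^ (b * m) * F ^ (a * m)) (H (Jmap z)))).1 := by
  have hiter (k : ℕ) : ((fun w : AnnulusCover => Jmap.symm (H.symm (shiftA (b : ℝ)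
        (((F.toEquiv : Equiv.Perm AnnulusCover) ^ a) (H (Jmap w))))))^[k] z)
      = Jmap.symm (H⁻¹ (((deck ^ b * F ^ a) ^ k) (H (Jmap z)))) := by
    induction k with
    | zero => simp
    | succ k ih =>
      rw [Function.iterate_succ_apply', ih, pow_succ']
      simp [toEquiv_zpow_apply, deck_zpow_apply]
  rw [hiter, ((hF.zpow_zpow a b).symm).mul_pow, ← zpow_natCast, ← zpow_natCast, ← zpow_mul,
    ← zpow_mul]
  rfl

end AnnulusCover

open AnnulusCover in
theorem stmt12_general (α : ℝ) (F H : AnnulusCover ≃ₜ AnnulusCover)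
    (hcomm : ∀ z : AnnulusCover, F (shiftA 1 z) = shiftA 1 (F z))
    (hrot : ∀ z : AnnulusCover, Filter.Tendsto
      (fun m : ℕ => ((((F.toEquiv : Equiv.Perm AnnulusCover) ^ m) z).1 - z.1) / (m : ℝ))
      Filter.atTop (nhds α))
    (n : ℕ) (hfrac : Int.fract ((n : ℝ) * α) ≠ 0)
    (a b : ℤ)
    (hH : ∀ z : AnnulusCover,
      shiftA (-(⌊(n : ℝ) * α⌋ : ℝ))
        (((F.toEquiv : Equiv.Perm AnnulusCover) ^ (n : ℤ)) (H z)) = H (shiftA 1 z))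
    (z : AnnulusCover) :
    Filter.Tendsto
      (fun m : ℕ =>
        (((fun w : AnnulusCover =>
            Jmap.symm (H.symm (shiftA (b : ℝ)
              (((F.toEquiv : Equiv.Perm AnnulusCover) ^ a) (H (Jmap w))))))^[m] z).1 - z.1)
          / (m : ℝ))
      Filter.atTop (nhds (-((a : ℝ) * α + (b : ℝ)) / Int.fract ((n : ℝ) * α))) := by
  have hF : Commute F deck := commute_deck_of_apply hcomm
  have hrotF : HasRotationNumber F α := by
    simpa only [HasRotationNumber, disp, toEquiv_pow_apply] using hrot
  set p := ⌊(n : ℝ) * α⌋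
  have hγ : Int.fract ((n : ℝ) * α) = ((n : ℤ) : ℝ) * α - p := by
    rw [← Int.self_sub_floor]; push_cast; rfl
  have hΦ : deck ^ (-p) * F ^ (n : ℤ) * H = H * deck := deck_zpow_neg_mul_zpow_mul_eq hH
  obtain ⟨A, hA, hψ⟩ :=
    exists_abs_fst_inv_apply_le ((Commute.zpow_self deck (-p)).mul_left (hF.zpow_left n)) hΦ
  set φ : ℤ → ℤ → ℝ := fun c d => (H⁻¹ ((deck ^ c * F ^ d) (H (Jmap z)))).1
  have hper (c d : ℤ) : φ (c - p) (d + n) = φ c d + 1 := by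
    simp only [φ]
    rw [deck_zpow_sub_mul_zpow_add hF, Homeomorph.mul_apply]
    exact fst_inv_apply_of_mul_eq hΦ _
  have hbd (ε : ℝ) (hε : 0 < ε) : ∃ C, ∀ c d : ℤ, 0 ≤ c + d * α → c + d * α ≤ (n : ℤ) * α - p →
      |φ c d| ≤ ε * |(d : ℝ)| + C :=
    (exists_abs_fst_inv_apply_deck_zpow_mul_zpow_le hF hrotF hA hψ _ hε).imp
      fun C hC c d h₀ h₁ =>
        hC c d (abs_le.mpr ⟨by linarith, h₁.trans (hγ ▸ (Int.fract_lt_one _).le)⟩)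
  have hlim := tendsto_div_of_apply_sub_add_eq_add_one
    (hγ ▸ (Int.fract_nonneg _).lt_of_ne' hfrac) hper hbd a b
  simp_rw [fst_iterate_conj hF, hγ]
  convert hlim.neg.sub (tendsto_const_div_atTop_nhds_zero_nat z.1) using 2
  · ring
  · ring

/-- Renormalization changes the rotation number to `−(aα + b)/{nα}`:
if `F` is a homeomorphism of `ℝ × [0,1]` commuting with `T`, with rotation number `α`
(the limit defining `ρ(F)` exists and equals `α` at every point), `{nα} ≠ 0`, and `H` is a
homeomorphism with `F_n H = H T` where `F_n = T^{−⌊nα⌋} F^n`, then the rotation number of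
`(HJ)^{−1} T^b F^a (HJ)` equals `−(aα + b)/{nα}`. -/
theorem stmt12 (α : ℝ) (F H : AnnulusCover ≃ₜ AnnulusCover)
    (hcomm : ∀ z : AnnulusCover, F (shiftA 1 z) = shiftA 1 (F z))
    (hrot : ∀ z : AnnulusCover, Filter.Tendsto
      (fun m : ℕ => ((((F.toEquiv : Equiv.Perm AnnulusCover) ^ m) z).1 - z.1) / (m : ℝ))
      Filter.atTop (nhds α))
    (n : ℕ) (hn : 1 ≤ n) (hfrac : Int.fract ((n : ℝ) * α) ≠ 0)
    (a b : ℤ)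
    (hH : ∀ z : AnnulusCover,
      shiftA (-(⌊(n : ℝ) * α⌋ : ℝ))
        (((F.toEquiv : Equiv.Perm AnnulusCover) ^ (n : ℤ)) (H z)) = H (shiftA 1 z))
    (z : AnnulusCover) :
    Filter.Tendsto
      (fun m : ℕ =>
        (((fun w : AnnulusCover =>
            Jmap.symm (H.symm (shiftA (b : ℝ)
              (((F.toEquiv : Equiv.Perm AnnulusCover) ^ a) (H (Jmap w))))))^[m] z).1 - z.1)
          / (m : ℝ))
      Filter.atTop (nhds (-((a : ℝ) * α + (b : ℝ)) / Int.fract ((n : ℝ) * α))) :=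
  stmt12_general α F H hcomm hrot n hfrac a b hH z
end
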